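/- Let F : R^d → R be a Λ-Lipschitz, positively homogeneous function with F(x) = F(Π_V x) for a k-dimensional subspace V, and let W ⊆ V be an ℓ-dimensional subspace with ℓ < k. Let τ ≥ √(2(k−ℓ))·Λ and define M_τ^W = Π_{W^⊥} E_{x∼N(0,Id)}[1{|F(x) − F(Π_W x)| > τ}(xxᵀ − Id)] Π_{W^⊥}. Then ⟨M_τ^W, Π_{V∖W}⟩ ≥ (k−ℓ)·P_{x∼N(0,Id)}(|F(x) − F(Π_W x)| > τ), where V∖W is the orthogonal complement of W inside V. -/

import Mathlib

/-!
As `F = F ∘ Π_V` is `Λ`-Lipschitz, `|F x - F (Π_W x)| ≤ Λ ‖Π_V x - Π_W x‖`, and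
`Π_V x - Π_W x = Π_{V ⊓ W^⊥} y` with `y = x - Π_W x`. So on the event `|F x - F (Π_W x)| > τ`,
where `τ ≥ √(2(k - ℓ)) Λ`, we get `‖Π_{V ⊓ W^⊥} y‖² > 2(k - ℓ)`. Pairing the integrand of `M_τ^W`
with `Π_{V ⊓ W^⊥}` gives pointwise `‖Π_{V ⊓ W^⊥} y‖² - ⟨Π_{W^⊥}, Π_{V ⊓ W^⊥}⟩ = ‖Π_{V ⊓ W^⊥} y‖² - (k - ℓ)`,
which exceeds `k - ℓ` on the event; integrating gives the bound.
-/

open MeasureTheory ProbabilityTheory RealInnerProductSpace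

/-- The standard Gaussian measure `N(0, Id)` on `ℝ^d` (as a Euclidean space). -/
noncomputable def stdGaussianE (d : ℕ) : Measure (EuclideanSpace ℝ (Fin d)) :=
  (Measure.pi fun _ : Fin d => gaussianReal 0 1).map
    (MeasurableEquiv.toLp 2 (Fin d → ℝ))

/-- The matrix of the orthogonal projection onto a subspace `U ⊆ ℝ^d`. -/
noncomputable def projMatrix {d : ℕ} (U : Submodule ℝ (EuclideanSpace ℝ (Fin d)))
    (i j : Fin d) : ℝ :=
  (Submodule.orthogonalProjectionOnto U (EuclideanSpace.single j (1 : ℝ)) : EuclideanSpace ℝ (Fin d)) i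

theorem stdGaussianE_eq_stdGaussian (d : ℕ) :
    stdGaussianE d = stdGaussian (EuclideanSpace ℝ (Fin d)) :=
  map_pi_eq_stdGaussian

instance isGaussian_stdGaussianE (d : ℕ) : IsGaussian (stdGaussianE d) := by
  rw [stdGaussianE_eq_stdGaussian]; infer_instance

section
variable {ι : Type*} [Fintype ι] (μ : Measure (EuclideanSpace ℝ ι)) [IsGaussian μ]
  (U W : Submodule ℝ (EuclideanSpace ℝ ι)) [U.HasOrthogonalProjection] [W.HasOrthogonalProjection]

theorem integrable_sub_starProjection_mul_sub_starProjection_sub_const (i j : ι) (c : ℝ) :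
    Integrable (fun x => (x i - W.starProjection x i) * (x j - W.starProjection x j) - c) μ := by
  have hL (i : ι) := IsGaussian.memLp_dual μ
    (EuclideanSpace.proj i ∘L (ContinuousLinearMap.id ℝ _ - W.starProjection)) 2 (by simp)
  have := (hL i).integrable_mul (hL j)
  simp only [ContinuousLinearMap.comp_sub, ContinuousLinearMap.comp_id, FunLike.coe_sub,
    EuclideanSpace.coe_proj] at this
  exact this.sub (integrable_const c)

theorem integrable_norm_starProjection_sub_starProjection_sq :
    Integrable (fun x => ‖U.starProjection (x - W.starProjection x)‖ ^ 2) μ := by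
  have := ((U.starProjection ∘L (ContinuousLinearMap.id ℝ _ - W.starProjection)).comp_memLp'
    (IsGaussian.memLp_two_id (μ := μ))).integrable_norm_pow two_ne_zero
  simpa only [Function.comp_apply, ContinuousLinearMap.comp_apply, sub_apply,
    ContinuousLinearMap.id_apply, id] using this

end

theorem integral_ite_one_zero_mul {X : Type*} [MeasurableSpace X] {μ : Measure X} {p : X → Prop}
    [DecidablePred p] (hp : MeasurableSet {x | p x}) (f : X → ℝ) :
    ∫ x, (if p x then 1 else 0) * f x ∂μ = ∫ x in {x | p x}, f x ∂μ := by
  rw [← integral_indicator hp]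
  congr 1 with x
  by_cases hx : p x <;> simp [hx]

theorem sum_sum_setIntegral_mul {X ι : Type*} [MeasurableSpace X] [Fintype ι] {μ : Measure X}
    {S : Set X} {g : ι → ι → X → ℝ} (hg : ∀ i j, IntegrableOn (g i j) S μ) (c : ι → ι → ℝ) :
    ∑ i, ∑ j, (∫ x in S, g i j x ∂μ) * c i j = ∫ x in S, ∑ i, ∑ j, g i j x * c i j ∂μ := by
  rw [integral_finsetSum _ fun i _ => integrable_finsetSum _ fun j _ => (hg i j).mul_const _]
  refine Finset.sum_congr rfl fun i _ => ?_
  rw [integral_finsetSum _ fun j _ => (hg i j).mul_const _]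
  simp_rw [integral_mul_const]

theorem Submodule.finrank_inf_orthogonal_eq_sub {𝕜 E : Type*} [RCLike 𝕜] [NormedAddCommGroup E]
    [InnerProductSpace 𝕜 E] {V W : Submodule 𝕜 E} [FiniteDimensional 𝕜 V] (hWV : W ≤ V) :
    (Module.finrank 𝕜 (V ⊓ Wᗮ : Submodule 𝕜 E) : ℝ) = Module.finrank 𝕜 V - Module.finrank 𝕜 W := by
  rw [← Submodule.finrank_add_inf_finrank_orthogonal hWV, inf_comm]
  push_cast; ring

theorem Submodule.starProjection_inf_orthogonal_sub_starProjection {𝕜 E : Type*} [RCLike 𝕜]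
    [NormedAddCommGroup E] [InnerProductSpace 𝕜 E] {V W : Submodule 𝕜 E}
    [V.HasOrthogonalProjection] [W.HasOrthogonalProjection] [(V ⊓ Wᗮ).HasOrthogonalProjection]
    (hWV : W ≤ V) (x : E) :
    (V ⊓ Wᗮ).starProjection (x - W.starProjection x) = V.starProjection x - W.starProjection x := by
  apply Submodule.eq_starProjection_of_mem_orthogonal
  · refine Submodule.mem_inf.mpr ⟨?_, ?_⟩
    · exact sub_mem (V.starProjection_apply_mem x) (hWV (W.starProjection_apply_mem x))
    · rw [← sub_sub_sub_cancel_left _ _ x]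
      exact sub_mem (W.sub_starProjection_mem_orthogonal x)
        (Submodule.orthogonal_le hWV (V.sub_starProjection_mem_orthogonal x))
  · rw [sub_sub_sub_cancel_right]
    exact Submodule.orthogonal_le inf_le_left (V.sub_starProjection_mem_orthogonal x)

section
variable {d : ℕ} (U A : Submodule ℝ (EuclideanSpace ℝ (Fin d)))

theorem projMatrix_eq_inner (i j : Fin d) :
    projMatrix U i j = ⟪EuclideanSpace.single i 1, U.starProjection (EuclideanSpace.single j 1)⟫ := by
  simp [projMatrix, EuclideanSpace.inner_single_left]

theorem projMatrix_symm (i j : Fin d) : projMatrix U i j = projMatrix U j i := by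
  rw [projMatrix_eq_inner, projMatrix_eq_inner, ← Submodule.inner_starProjection_left_eq_right,
    real_inner_comm]

theorem sum_projMatrix_mul_eq_starProjection (y : EuclideanSpace ℝ (Fin d)) (i : Fin d) :
    ∑ j, projMatrix U i j * y j = U.starProjection y i := by
  calc ∑ j, projMatrix U i j * y j = ⟪U.starProjection (EuclideanSpace.single i 1), y⟫ := by
        simp only [projMatrix_symm U i]; simp [projMatrix, PiLp.inner_apply, mul_comm]
    _ = ⟪EuclideanSpace.single i 1, U.starProjection y⟫ :=
        U.inner_starProjection_left_eq_right _ _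
    _ = U.starProjection y i := by simp [EuclideanSpace.inner_single_left]

theorem sum_projMatrix_diag_eq_finrank : ∑ i, projMatrix U i i = Module.finrank ℝ U := by
  have hproj : LinearMap.IsProj U (U.starProjection : _ →ₗ[ℝ] _) :=
    ⟨U.starProjection_apply_mem, fun x hx => Submodule.starProjection_eq_self_iff.mpr hx⟩
  rw [← hproj.trace, LinearMap.trace_eq_sum_inner _ (EuclideanSpace.basisFun (Fin d) ℝ)]
  simp [projMatrix_eq_inner]

theorem sum_sum_mul_mul_projMatrix (y : EuclideanSpace ℝ (Fin d)) :
    ∑ i, ∑ j, y i * y j * projMatrix U i j = ‖U.starProjection y‖ ^ 2 := by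
  calc ∑ i, ∑ j, y i * y j * projMatrix U i j = ∑ i, y i * U.starProjection y i := by
        refine Finset.sum_congr rfl fun i _ => ?_
        rw [← sum_projMatrix_mul_eq_starProjection, Finset.mul_sum]
        exact Finset.sum_congr rfl fun j _ => by ring
    _ = ⟪y, U.starProjection y⟫ := by simp [PiLp.inner_apply, mul_comm]
    _ = ‖U.starProjection y‖ ^ 2 := by
        simpa [real_inner_comm] using U.re_inner_starProjection_eq_normSq y

theorem sum_sum_projMatrix_mul_projMatrix (hUA : U ≤ A) :
    ∑ i, ∑ j, projMatrix A i j * projMatrix U i j = Module.finrank ℝ U := by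
  calc ∑ i, ∑ j, projMatrix A i j * projMatrix U i j
      = ∑ i, A.starProjection (U.starProjection (EuclideanSpace.single i 1)) i := by
        refine Finset.sum_congr rfl fun i _ => ?_
        rw [← sum_projMatrix_mul_eq_starProjection]
        simp only [projMatrix_symm U i]
        rfl
    _ = ∑ i, projMatrix U i i := by
        simp_rw [Submodule.starProjection_eq_self_iff.mpr (hUA (U.starProjection_apply_mem _))]; rfl
    _ = Module.finrank ℝ U := sum_projMatrix_diag_eq_finrank U

theorem sum_sum_sub_projMatrix_mul_projMatrix (hUA : U ≤ A) (y : EuclideanSpace ℝ (Fin d)) :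
    ∑ i, ∑ j, (y i * y j - projMatrix A i j) * projMatrix U i j
      = ‖U.starProjection y‖ ^ 2 - Module.finrank ℝ U := by
  simp only [sub_mul, Finset.sum_sub_distrib, sum_sum_mul_mul_projMatrix,
    sum_sum_projMatrix_mul_projMatrix U A hUA]

end

theorem lt_sq_norm_sub_of_lt_abs_sub {E : Type*} [NormedAddCommGroup E] [InnerProductSpace ℝ E]
    {F : E → ℝ} {V W : Submodule ℝ E} [V.HasOrthogonalProjection] [W.HasOrthogonalProjection]
    {Λ τ r : ℝ} (hΛ : 0 < Λ) (hτ : Real.sqrt r * Λ ≤ τ)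
    (hLip : ∀ x y, |F x - F y| ≤ Λ * ‖x - y‖) (hV : ∀ x, F x = F (V.starProjection x))
    {x : E} (hx : τ < |F x - F (W.starProjection x)|) :
    r < ‖V.starProjection x - W.starProjection x‖ ^ 2 := by
  have hlt : Real.sqrt r * Λ < ‖V.starProjection x - W.starProjection x‖ * Λ := by
    calc Real.sqrt r * Λ ≤ τ := hτ
      _ < |F (V.starProjection x) - F (W.starProjection x)| := hV x ▸ hx
      _ ≤ ‖V.starProjection x - W.starProjection x‖ * Λ := mul_comm Λ _ ▸ hLip _ _
  have hsqrt := lt_of_mul_lt_mul_right hlt hΛ.le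
  exact (Real.sqrt_lt' ((Real.sqrt_nonneg r).trans_lt hsqrt)).mp hsqrt

theorem stmt15_general {d k ℓ : ℕ} (F : EuclideanSpace ℝ (Fin d) → ℝ)
    (V W : Submodule ℝ (EuclideanSpace ℝ (Fin d))) (hWV : W ≤ V)
    (hk : Module.finrank ℝ V = k) (hℓ : Module.finrank ℝ W = ℓ)
    (Λ τ : ℝ) (hΛ : 0 < Λ)
    (hτ : Real.sqrt (2 * ((k : ℝ) - ℓ)) * Λ ≤ τ)
    (hLip : ∀ x y, |F x - F y| ≤ Λ * ‖x - y‖)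
    (hV : ∀ x, F x = F (Submodule.orthogonalProjectionOnto V x : EuclideanSpace ℝ (Fin d)))
    (Mmat : Matrix (Fin d) (Fin d) ℝ)
    (hM : ∀ i j, Mmat i j =
      ∫ x, (if τ < |F x - F (Submodule.orthogonalProjectionOnto W x : EuclideanSpace ℝ (Fin d))|
              then (1 : ℝ) else 0)
        * ((x i - (Submodule.orthogonalProjectionOnto W x : EuclideanSpace ℝ (Fin d)) i)
            * (x j - (Submodule.orthogonalProjectionOnto W x : EuclideanSpace ℝ (Fin d)) j)
            - projMatrix Wᗮ i j)
        ∂(stdGaussianE d)) :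
    ((k : ℝ) - ℓ) *
        (stdGaussianE d
          {x | τ < |F x - F (Submodule.orthogonalProjectionOnto W x : EuclideanSpace ℝ (Fin d))|}).toReal
      ≤ ∑ i, ∑ j, Mmat i j * projMatrix (V ⊓ Wᗮ) i j := by
  -- Not `at hM`: that would leave the decidability instance of its `if` ill-typed.
  simp only [Submodule.coe_orthogonalProjectionOnto_apply] at hV ⊢
  set μ := stdGaussianE d
  set S := {x | τ < |F x - F (W.starProjection x)|}
  have hF : Continuous F := (LipschitzWith.of_dist_le_mul (K := Λ.toNNReal) fun x y => by
    simpa [Real.dist_eq, dist_eq_norm, hΛ.le] using hLip x y).continuous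
  have hS : MeasurableSet S := measurableSet_lt measurable_const (by fun_prop)
  have hrank := Submodule.finrank_inf_orthogonal_eq_sub (𝕜 := ℝ) hWV
  rw [hk, hℓ] at hrank
  calc ((k : ℝ) - ℓ) * (μ S).toReal = ∫ x in S, ((k : ℝ) - ℓ) ∂μ := by
        rw [setIntegral_const, smul_eq_mul, mul_comm, Measure.real]
    _ ≤ ∫ x in S, ‖(V ⊓ Wᗮ).starProjection (x - W.starProjection x)‖ ^ 2 - ((k : ℝ) - ℓ) ∂μ :=
        setIntegral_mono_on (integrable_const _).integrableOn
          ((integrable_norm_starProjection_sub_starProjection_sq μ _ W).sub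
            (integrable_const _)).integrableOn hS fun x hx => by
            have hgap := lt_sq_norm_sub_of_lt_abs_sub hΛ hτ hLip hV hx
            rw [Submodule.starProjection_inf_orthogonal_sub_starProjection hWV]
            linarith
    _ = ∫ x in S, ∑ i, ∑ j, ((x i - W.starProjection x i) * (x j - W.starProjection x j)
          - projMatrix Wᗮ i j) * projMatrix (V ⊓ Wᗮ) i j ∂μ := by
        congr 1 with x
        have hpair := sum_sum_sub_projMatrix_mul_projMatrix (V ⊓ Wᗮ) Wᗮ inf_le_right
          (x - W.starProjection x)
        simp only [PiLp.sub_apply] at hpair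
        rw [hpair, hrank]
    _ = ∑ i, ∑ j, Mmat i j * projMatrix (V ⊓ Wᗮ) i j := by
        simp_rw [fun i j => (hM i j).trans (integral_ite_one_zero_mul hS _)]
        exact (sum_sum_setIntegral_mul (fun i j =>
          (integrable_sub_starProjection_mul_sub_starProjection_sub_const μ W i j _).integrableOn) _).symm

/-- for `τ ≥ √(2(k−ℓ))·Λ` and
`M_τ^W = Π_{W^⊥} E[1{|F(x) − F(Π_W x)| > τ}(xxᵀ − Id)] Π_{W^⊥}`, the trace inner product
of `M_τ^W` with the projector onto `V∖W = V ⊓ W^⊥` is at least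
`(k−ℓ) · P(|F(x) − F(Π_W x)| > τ)`. -/
theorem stmt15 {d k ℓ : ℕ} (F : EuclideanSpace ℝ (Fin d) → ℝ)
    (V W : Submodule ℝ (EuclideanSpace ℝ (Fin d))) (hWV : W ≤ V)
    (hk : Module.finrank ℝ V = k) (hℓ : Module.finrank ℝ W = ℓ) (hℓk : ℓ < k)
    (Λ τ : ℝ) (hΛ : 0 < Λ)
    (hτ : Real.sqrt (2 * ((k : ℝ) - ℓ)) * Λ ≤ τ)
    (hcont : Continuous F)
    (hLip : ∀ x y, |F x - F y| ≤ Λ * ‖x - y‖)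
    (hhom : ∀ a : ℝ, 0 ≤ a → ∀ x, F (a • x) = a * F x)
    (hV : ∀ x, F x = F (Submodule.orthogonalProjectionOnto V x : EuclideanSpace ℝ (Fin d)))
    (Mmat : Matrix (Fin d) (Fin d) ℝ)
    (hM : ∀ i j, Mmat i j =
      ∫ x, (if τ < |F x - F (Submodule.orthogonalProjectionOnto W x : EuclideanSpace ℝ (Fin d))|
              then (1 : ℝ) else 0)
        * ((x i - (Submodule.orthogonalProjectionOnto W x : EuclideanSpace ℝ (Fin d)) i)
            * (x j - (Submodule.orthogonalProjectionOnto W x : EuclideanSpace ℝ (Fin d)) j)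
            - projMatrix Wᗮ i j)
        ∂(stdGaussianE d)) :
    ((k : ℝ) - ℓ) *
        (stdGaussianE d
          {x | τ < |F x - F (Submodule.orthogonalProjectionOnto W x : EuclideanSpace ℝ (Fin d))|}).toReal
      ≤ ∑ i, ∑ j, Mmat i j * projMatrix (V ⊓ Wᗮ) i j :=
  stmt15_general F V W hWV hk hℓ Λ τ hΛ hτ hLip hV Mmat hM
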